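/- Lower bound on the number of inliers per block: let n = m·S with m, S ≥ 1, let I ⊆ {1,…,n} be a fixed set of inliers with complement O (so |I| = n − |O|), and partition {1,…,n} uniformly at random into S disjoint blocks B_1,…,B_S of size m (e.g. via a uniform random permutation). Then with probability at least 1 − 1/(2n), simultaneously for every s ∈ {1,…,S}: m(1 − |O|/n) − √(m log(4nS)) ≤ |B_s ∩ I| ≤ m. -/

import Mathlib

open MeasureTheory Real Finset
open scoped ENNReal Classical

namespace Stmt9

instance (n : ℕ) : MeasurableSpace (Equiv.Perm (Fin n)) := ⊤

/-- The uniform probability measure on a finite type. -/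
noncomputable def unif (α : Type*) [Fintype α] [MeasurableSpace α] : Measure α :=
  (Fintype.card α : ℝ≥0∞)⁻¹ • Measure.count

/-- The block with index `s` obtained from the permutation `σ` of `{1,…,n}`: the
`s`-th consecutive segment of length `m` of the permuted indices,
`B_s = {σ((s-1)m+1), …, σ(sm)}`. -/
def blockSet {n : ℕ} (m : ℕ) (σ : Equiv.Perm (Fin n)) (s : ℕ) : Finset (Fin n) :=
  Finset.univ.filter fun i => (σ.symm i : ℕ) / m = s

-- tangent line inequality for x^m
lemma tangent_pow (m : ℕ) (hm : 1 ≤ m) {b x : ℝ} (hb : 0 ≤ b) (hx : 0 ≤ x) :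
    b^m + m * b^(m-1) * (x - b) ≤ x^m := by
  have key : (x - b) * ∑ i ∈ range m, x ^ i * b ^ (m - 1 - i)
      ≥ (x - b) * (m * b^(m-1)) := by
    rcases le_total b x with h | h
    · apply mul_le_mul_of_nonneg_left _ (by linarith)
      calc (m : ℝ) * b^(m-1) = ∑ _i ∈ range m, b^(m-1) := by
            rw [Finset.sum_const, card_range, nsmul_eq_mul]
        _ ≤ ∑ i ∈ range m, x ^ i * b ^ (m - 1 - i) := by
            apply Finset.sum_le_sum
            intro i hi
            rw [mem_range] at hi
            calc b^(m-1) = b^i * b^(m-1-i) := by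
                  rw [← pow_add]; congr 1; omega
              _ ≤ x^i * b^(m-1-i) :=
                  mul_le_mul_of_nonneg_right (pow_le_pow_left₀ hb h i) (pow_nonneg hb _)
    · rw [ge_iff_le, ← neg_le_neg_iff, ← neg_mul, ← neg_mul]
      apply mul_le_mul_of_nonneg_left _ (by linarith)
      calc ∑ i ∈ range m, x ^ i * b ^ (m - 1 - i)
          ≤ ∑ _i ∈ range m, b^(m-1) := by
            apply Finset.sum_le_sum
            intro i hi
            rw [mem_range] at hi
            calc x^i * b^(m-1-i) ≤ b^i * b^(m-1-i) :=
                  mul_le_mul_of_nonneg_right (pow_le_pow_left₀ hx h i) (pow_nonneg hb _)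
              _ = b^(m-1) := by rw [← pow_add]; congr 1; omega
        _ = (m:ℝ) * b^(m-1) := by rw [Finset.sum_const, card_range, nsmul_eq_mul]
  have id : x^m - b^m = (x - b) * ∑ i ∈ range m, x ^ i * b ^ (m - 1 - i) := by
    rw [mul_comm, geom_sum₂_mul]
  nlinarith [key, id]

lemma sumA (n : ℕ) : ∀ K m : ℕ, K ≤ n → ∀ y : ℝ, 0 ≤ y →
    ∑ k ∈ range (m+1), (K.choose k : ℝ) * ((n-K).choose (m-k) : ℝ) * y^k
      ≤ (n.choose m : ℝ) * (1 - K/n + K/n*y)^m := by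
  induction n with
  | zero =>
    intro K m hK y hy
    interval_cases K
    simp only [Nat.cast_zero, CharP.cast_eq_zero, zero_div, sub_zero, zero_mul, add_zero, one_pow,
      mul_one, Nat.zero_sub]
    rcases Nat.eq_zero_or_pos m with rfl | hm
    · simp
    · rw [Finset.sum_eq_zero]
      · positivity
      · intro k hk
        rcases Nat.eq_zero_or_pos k with rfl | hk0
        · simp [Nat.choose_eq_zero_of_lt hm]
        · simp [Nat.choose_eq_zero_of_lt hk0]
  | succ n ih =>
    intro K m hK y hy
    rcases Nat.eq_zero_or_pos K with rfl | hK1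
    · -- K = 0
      rw [Finset.sum_eq_single 0]
      · simp
      · intro k hk hk0
        simp [Nat.choose_eq_zero_of_lt (Nat.pos_of_ne_zero hk0)]
      · intro h; exact absurd (Finset.mem_range.2 (Nat.succ_pos m)) h
    rcases Nat.eq_zero_or_pos m with rfl | hm1
    · simp
    by_cases hmn : n + 1 < m
    · -- m > n+1 : both sides zero
      rw [Finset.sum_eq_zero, Nat.choose_eq_zero_of_lt hmn]
      · simp
      · intro k hk
        rw [Finset.mem_range] at hk
        rcases Nat.lt_or_ge K k with h | h
        · simp [Nat.choose_eq_zero_of_lt h]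
        · have : n + 1 - K < m - k := by omega
          simp [Nat.choose_eq_zero_of_lt this]
    push_neg at hmn
    rcases Nat.eq_zero_or_pos n with rfl | hn1
    · -- n = 0 : K = 1, m = 1
      have hK' : K = 1 := le_antisymm hK hK1
      have hm' : m = 1 := le_antisymm hmn hm1
      subst hK'; subst hm'
      norm_num [Finset.sum_range_succ]
    -- main case : n ≥ 1, 1 ≤ K ≤ n+1, 1 ≤ m ≤ n+1
    obtain ⟨K', rfl⟩ : ∃ K', K = K' + 1 := ⟨K - 1, by omega⟩
    obtain ⟨M, rfl⟩ : ∃ M, m = M + 1 := ⟨m - 1, by omega⟩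
    have hK'n : K' ≤ n := by omega
    have hsub : n + 1 - (K' + 1) = n - K' := by omega
    rw [hsub]
    -- recursion identity
    have hrec : ∑ k ∈ range (M+1+1), ((K'+1).choose k : ℝ) * ((n-K').choose (M+1-k) : ℝ) * y^k
        = y * ∑ k ∈ range (M+1), (K'.choose k : ℝ) * ((n-K').choose (M-k) : ℝ) * y^k
          + ∑ k ∈ range (M+1+1), (K'.choose k : ℝ) * ((n-K').choose (M+1-k) : ℝ) * y^k := by
      rw [Finset.sum_range_succ' (fun k => ((K'+1).choose k : ℝ) * ((n-K').choose (M+1-k) : ℝ) * y^k)]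
      rw [Finset.sum_range_succ' (fun k => ((K'.choose k : ℝ)) * ((n-K').choose (M+1-k) : ℝ) * y^k)]
      rw [Finset.mul_sum]
      have : ∀ k ∈ range (M+1),
          ((K'+1).choose (k+1) : ℝ) * ((n-K').choose (M+1-(k+1)) : ℝ) * y^(k+1)
          = y * ((K'.choose k : ℝ) * ((n-K').choose (M-k) : ℝ) * y^k)
            + (K'.choose (k+1) : ℝ) * ((n-K').choose (M+1-(k+1)) : ℝ) * y^(k+1) := by
        intro k hk
        have : (K'+1).choose (k+1) = K'.choose k + K'.choose (k+1) := Nat.choose_succ_succ' K' k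
        rw [this]
        have hMk : M + 1 - (k+1) = M - k := by omega
        rw [hMk]
        push_cast
        ring
      rw [Finset.sum_congr rfl this, Finset.sum_add_distrib]
      simp [Nat.choose_zero_right]
      ring
    rw [hrec]
    -- apply IH
    set q : ℝ := (K' : ℝ) / n with hq
    set b : ℝ := 1 - q + q * y with hb
    have ih1 := ih K' M hK'n y hy
    have ih2 := ih K' (M+1) hK'n y hy
    have hqnonneg : 0 ≤ q := by positivity
    have hq1 : q ≤ 1 := by
      rw [hq, div_le_one (by exact_mod_cast hn1)]
      exact_mod_cast hK'n
    have hbnonneg : 0 ≤ b := by nlinarith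
    set p : ℝ := ((K' : ℝ) + 1) / (n + 1) with hp
    set d : ℝ := (p - q) * (y - 1) with hd
    have hn0 : (n : ℝ) ≠ 0 := by exact_mod_cast hn1.ne'
    have hn10 : (n : ℝ) + 1 ≠ 0 := by positivity
    have hbd2 : b + d = 1 - p + p * y := by
      rw [hb, hd, hp, hq]; field_simp; ring
    have pascal : ((n+1).choose (M+1) : ℝ) = (n.choose M : ℝ) + (n.choose (M+1) : ℝ) := by
      rw [Nat.choose_succ_succ]; push_cast; ring
    have smcNat : (M+1) * (n+1).choose (M+1) = (n+1) * n.choose M := by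
      have h := Nat.add_one_mul_choose_eq n M
      rw [h, Nat.mul_comm]
    have smc : ((M:ℝ)+1) * ((n+1).choose (M+1) : ℝ) = ((n:ℝ)+1) * (n.choose M : ℝ) := by
      exact_mod_cast smcNat
    -- scalar identity
    have scalar : ((n+1).choose (M+1) : ℝ) * (b + ((M:ℝ)+1) * d)
        = y * (n.choose M : ℝ) + (n.choose (M+1) : ℝ) * b := by
      have hbdy : b + ((n:ℝ)+1) * d = y := by
        rw [hb, hd, hp, hq]; field_simp; ring
      calc ((n+1).choose (M+1) : ℝ) * (b + ((M:ℝ)+1) * d)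
          = ((n+1).choose (M+1) : ℝ) * b + (((M:ℝ)+1) * ((n+1).choose (M+1):ℝ)) * d := by ring
        _ = ((n.choose M : ℝ) + (n.choose (M+1):ℝ)) * b + (((n:ℝ)+1) * (n.choose M : ℝ)) * d := by
            rw [smc, pascal]
        _ = (n.choose M : ℝ) * (b + ((n:ℝ)+1)*d) + (n.choose (M+1):ℝ) * b := by ring
        _ = y * (n.choose M : ℝ) + (n.choose (M+1) : ℝ) * b := by rw [hbdy]; ring
    calc y * ∑ k ∈ range (M+1), (K'.choose k : ℝ) * ((n-K').choose (M-k) : ℝ) * y^k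
          + ∑ k ∈ range (M+1+1), (K'.choose k : ℝ) * ((n-K').choose (M+1-k) : ℝ) * y^k
        ≤ y * ((n.choose M : ℝ) * b^M) + (n.choose (M+1) : ℝ) * b^(M+1) :=
          add_le_add (mul_le_mul_of_nonneg_left ih1 hy) ih2
      _ = (y * (n.choose M : ℝ) + (n.choose (M+1) : ℝ) * b) * b^M := by ring
      _ = ((n+1).choose (M+1) : ℝ) * (b + ((M:ℝ)+1) * d) * b^M := by rw [scalar]
      _ = ((n+1).choose (M+1) : ℝ) * (b^(M+1) + ((M:ℝ)+1) * b^M * ((b+d) - b)) := by ring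
      _ ≤ ((n+1).choose (M+1) : ℝ) * (b+d)^(M+1) := by
          apply mul_le_mul_of_nonneg_left _ (by positivity)
          have hp0 : 0 ≤ p := by positivity
          have hp1 : p ≤ 1 := by
            rw [hp, div_le_one (by positivity)]
            have : (K' : ℝ) ≤ n := by exact_mod_cast hK'n
            linarith
          have hx : 0 ≤ b + d := by rw [hbd2]; nlinarith [mul_nonneg hp0 hy]
          have := tangent_pow (M+1) (by omega) hbnonneg hx
          simpa using this
      _ = ((n+1).choose (M+1) : ℝ) * (1 - (↑(K'+1))/(↑(n+1)) + (↑(K'+1))/(↑(n+1))*y)^(M+1) := by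
          rw [hbd2, hp]; push_cast; ring_nf

lemma cardSplit {n : ℕ} (O : Finset (Fin n)) (m k : ℕ) (hk : k ≤ m) :
    ((powersetCard m (univ : Finset (Fin n))).filter (fun T => (T ∩ O).card = k)).card
      = O.card.choose k * (Oᶜ.card.choose (m - k)) := by
  rw [← Finset.card_powersetCard k O, ← Finset.card_powersetCard (m-k) Oᶜ,
    ← Finset.card_product]
  apply Finset.card_nbij' (fun T => (T ∩ O, T \ O)) (fun P => P.1 ∪ P.2)
  · intro T hT
    simp only [Finset.mem_coe, Finset.mem_filter, Finset.mem_powersetCard] at hT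
    obtain ⟨⟨-, hcard⟩, hk⟩ := hT
    simp only [Finset.mem_coe, Finset.mem_product, Finset.mem_powersetCard]
    refine ⟨⟨Finset.inter_subset_right, hk⟩, ?_, ?_⟩
    · intro x hx
      simp only [Finset.mem_sdiff] at hx
      simp [Finset.mem_compl, hx.2]
    · have := Finset.card_sdiff_add_card_inter T O
      omega
  · intro P hP
    simp only [Finset.mem_coe, Finset.mem_product, Finset.mem_powersetCard] at hP
    obtain ⟨⟨hP1, hc1⟩, hP2, hc2⟩ := hP
    have hdisj : Disjoint P.1 P.2 := by
      apply Finset.disjoint_left.mpr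
      intro a ha1 ha2
      exact absurd (hP1 ha1) (Finset.mem_compl.mp (hP2 ha2))
    simp only [Finset.mem_coe, Finset.mem_filter, Finset.mem_powersetCard]
    have hinter : (P.1 ∪ P.2) ∩ O = P.1 := by
      ext a
      simp only [Finset.mem_inter, Finset.mem_union]
      constructor
      · rintro ⟨h1 | h2, hO⟩
        · exact h1
        · exact absurd hO (Finset.mem_compl.mp (hP2 h2))
      · intro h; exact ⟨Or.inl h, hP1 h⟩
    refine ⟨⟨Finset.subset_univ _, ?_⟩, by rw [hinter, hc1]⟩
    rw [Finset.card_union_of_disjoint hdisj, hc1, hc2]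
    omega
  · intro T hT
    ext a
    simp only [Finset.mem_union, Finset.mem_inter, Finset.mem_sdiff]
    tauto
  · intro P hP
    simp only [Finset.mem_coe, Finset.mem_product, Finset.mem_powersetCard] at hP
    obtain ⟨⟨hP1, hc1⟩, hP2, hc2⟩ := hP
    have h2O : ∀ a ∈ P.2, a ∉ O := fun a ha => Finset.mem_compl.mp (hP2 ha)
    have e1 : (P.1 ∪ P.2) ∩ O = P.1 := by
      ext a
      simp only [Finset.mem_inter, Finset.mem_union]
      constructor
      · rintro ⟨h1 | h2, hO⟩
        · exact h1
        · exact absurd hO (h2O a h2)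
      · intro h; exact ⟨Or.inl h, hP1 h⟩
    have e2 : (P.1 ∪ P.2) \ O = P.2 := by
      ext a
      simp only [Finset.mem_sdiff, Finset.mem_union]
      constructor
      · rintro ⟨h1 | h2, hO⟩
        · exact absurd (hP1 h1) hO
        · exact h2
      · intro h; exact ⟨Or.inr h, h2O a h⟩
    rw [Prod.ext_iff]
    exact ⟨e1, e2⟩

lemma sumC {n : ℕ} (m : ℕ) (O : Finset (Fin n)) (y : ℝ) :
    ∑ T ∈ powersetCard m (univ : Finset (Fin n)), y ^ (T ∩ O).card
      = ∑ k ∈ range (m+1), (O.card.choose k : ℝ) * ((Oᶜ.card).choose (m-k) : ℝ) * y^k := by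
  have hmaps : ∀ T ∈ powersetCard m (univ : Finset (Fin n)), (T ∩ O).card ∈ range (m+1) := by
    intro T hT
    rw [Finset.mem_powersetCard] at hT
    rw [Finset.mem_range]
    have : (T ∩ O).card ≤ T.card := Finset.card_le_card Finset.inter_subset_left
    omega
  rw [← Finset.sum_fiberwise_of_maps_to hmaps (fun T => y ^ (T ∩ O).card)]
  apply Finset.sum_congr rfl
  intro k hk
  rw [Finset.mem_range] at hk
  have : ∀ T ∈ (powersetCard m (univ : Finset (Fin n))).filter (fun T => (T ∩ O).card = k),
      y ^ (T ∩ O).card = y ^ k := by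
    intro T hT
    rw [Finset.mem_filter] at hT
    rw [hT.2]
  rw [Finset.sum_congr rfl this, Finset.sum_const, cardSplit O m k (by omega), nsmul_eq_mul]
  push_cast
  ring

lemma fiber_const {n m : ℕ} (J : Finset (Fin n)) (T T' : Finset (Fin n))
    (hT : T ∈ powersetCard m (univ : Finset (Fin n)))
    (hT' : T' ∈ powersetCard m (univ : Finset (Fin n))) :
    ((univ : Finset (Equiv.Perm (Fin n))).filter (fun σ : Equiv.Perm (Fin n) => J.image ⇑σ = T)).card
      = ((univ : Finset (Equiv.Perm (Fin n))).filter (fun σ : Equiv.Perm (Fin n) => J.image ⇑σ = T')).card := by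
  rw [Finset.mem_powersetCard] at hT hT'
  have hcard : T.card = T'.card := by rw [hT.2, hT'.2]
  have e : {x // x ∈ T} ≃ {x // x ∈ T'} :=
    Fintype.equivOfCardEq (by simpa [Fintype.card_coe] using hcard)
  set tau0 : Equiv.Perm (Fin n) := e.extendSubtype with htau0
  have hTT' : T.image tau0 = T' := by
    apply Finset.eq_of_subset_of_card_le
    · intro x hx
      rw [Finset.mem_image] at hx
      obtain ⟨a, ha, rfl⟩ := hx
      exact Equiv.extendSubtype_mem e a ha
    · rw [Finset.card_image_of_injective _ tau0.injective, hcard]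
  have himg : ∀ (σ : Equiv.Perm (Fin n)) (W W' : Finset (Fin n)) (ρ : Equiv.Perm (Fin n)),
      W.image ρ = W' → J.image σ = W → J.image (σ.trans ρ) = W' := by
    intro σ W W' ρ hW hσ
    rw [← hW, ← hσ, Finset.image_image]
    rfl
  have hT'T : T'.image tau0.symm = T := by
    rw [← hTT', Finset.image_image]
    simp
  apply Finset.card_nbij' (fun σ => σ.trans tau0) (fun τ => τ.trans tau0.symm)
  · intro σ hσ
    rw [Finset.mem_coe, Finset.mem_filter] at hσ ⊢
    exact ⟨Finset.mem_univ _, himg σ T T' tau0 hTT' hσ.2⟩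
  · intro τ hτ
    rw [Finset.mem_coe, Finset.mem_filter] at hτ ⊢
    exact ⟨Finset.mem_univ _, himg τ T' T tau0.symm hT'T hτ.2⟩
  · intro σ _; ext x; simp
  · intro τ _; ext x; simp

lemma sumPerm {n : ℕ} (m : ℕ) (J O : Finset (Fin n)) (hJ : J.card = m) (y : ℝ) (hy : 0 ≤ y) :
    ∑ σ : Equiv.Perm (Fin n), y ^ ((J.image σ) ∩ O).card
      ≤ (n.factorial : ℝ) * (1 - (O.card:ℝ)/n + (O.card:ℝ)/n * y)^m := by
  have hmaps : ∀ σ ∈ (univ : Finset (Equiv.Perm (Fin n))),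
      J.image σ ∈ powersetCard m (univ : Finset (Fin n)) := by
    intro σ _
    rw [Finset.mem_powersetCard]
    exact ⟨Finset.subset_univ _, by rw [Finset.card_image_of_injective _ σ.injective, hJ]⟩
  have hJmem : J ∈ powersetCard m (univ : Finset (Fin n)) := by
    rw [Finset.mem_powersetCard]; exact ⟨Finset.subset_univ _, hJ⟩
  set c : ℕ := ((univ : Finset (Equiv.Perm (Fin n))).filter (fun σ : Equiv.Perm (Fin n) => J.image ⇑σ = J)).card with hc
  have hfib : ∀ T ∈ powersetCard m (univ : Finset (Fin n)),
      ((univ : Finset (Equiv.Perm (Fin n))).filter (fun σ : Equiv.Perm (Fin n) => J.image ⇑σ = T)).card = c :=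
    fun T hT => fiber_const J T J hT hJmem
  -- counting: n! = c * C(n,m)
  have hcount : (n.factorial) = c * (n.choose m) := by
    have h1 := Finset.card_eq_sum_card_fiberwise hmaps
    rw [Finset.sum_congr rfl hfib, Finset.sum_const, Finset.card_powersetCard,
      Finset.card_univ, Fintype.card_perm, Fintype.card_fin, Finset.card_univ,
      Fintype.card_fin, smul_eq_mul, mul_comm] at h1
    exact h1
  -- sum over permutations = c * sum over sets
  have hsum : ∑ σ : Equiv.Perm (Fin n), y ^ ((J.image σ) ∩ O).card
      = (c:ℝ) * ∑ T ∈ powersetCard m (univ : Finset (Fin n)), y ^ (T ∩ O).card := by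
    rw [← Finset.sum_fiberwise_of_maps_to hmaps (fun σ => y ^ ((J.image σ) ∩ O).card),
      Finset.mul_sum]
    apply Finset.sum_congr rfl
    intro T hT
    have : ∀ σ ∈ (univ : Finset (Equiv.Perm (Fin n))).filter (fun σ : Equiv.Perm (Fin n) => J.image ⇑σ = T),
        y ^ ((J.image σ) ∩ O).card = y ^ (T ∩ O).card := by
      intro σ hσ
      rw [Finset.mem_filter] at hσ
      rw [hσ.2]
    rw [Finset.sum_congr rfl this, Finset.sum_const, hfib T hT, nsmul_eq_mul]
  rw [hsum]
  have hO : O.card ≤ n := by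
    have := Finset.card_le_univ O
    simpa using this
  have hcompl : Oᶜ.card = n - O.card := by
    simp [Finset.card_compl]
  calc (c:ℝ) * ∑ T ∈ powersetCard m (univ : Finset (Fin n)), y ^ (T ∩ O).card
      = (c:ℝ) * ∑ k ∈ range (m+1),
          (O.card.choose k : ℝ) * ((n - O.card).choose (m-k) : ℝ) * y^k := by
        rw [sumC m O y, hcompl]
    _ ≤ (c:ℝ) * ((n.choose m : ℝ) * (1 - (O.card:ℝ)/n + (O.card:ℝ)/n*y)^m) :=
        mul_le_mul_of_nonneg_left (sumA n O.card m hO y hy) (Nat.cast_nonneg c)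
    _ = (n.factorial : ℝ) * (1 - (O.card:ℝ)/n + (O.card:ℝ)/n * y)^m := by
        rw [← mul_assoc, ← Nat.cast_mul, ← hcount]

lemma H_mono {p x : ℝ} (hp : 0 < p) (hx : x < 1) (hpx : p ≤ x) :
    MonotoneOn (fun u => Real.log u - Real.log (1-u) - 2*u) (Set.Icc p x) := by
  have hsub : Set.Icc p x ⊆ Set.Ioo 0 1 := fun u hu => ⟨lt_of_lt_of_le hp hu.1, lt_of_le_of_lt hu.2 hx⟩
  have hder : ∀ u ∈ Set.Ioo 0 1, HasDerivAt (fun u => Real.log u - Real.log (1-u) - 2*u)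
      (1/u + 1/(1-u) - 2) u := by
    intro u hu
    have h1 : HasDerivAt Real.log (1/u) u := by
      simpa [one_div] using Real.hasDerivAt_log (ne_of_gt hu.1)
    have h2 : HasDerivAt (fun u : ℝ => 1 - u) (-1) u := by
      simpa using (hasDerivAt_id u).const_sub 1
    have h3 : HasDerivAt (fun u : ℝ => Real.log (1-u)) (-1/(1-u)) u := by
      have := h2.log (by linarith [hu.2] : (1:ℝ) - u ≠ 0)
      simpa [div_eq_mul_inv] using this
    have h4 : HasDerivAt (fun u : ℝ => 2*u) 2 u := by
      simpa using (hasDerivAt_id u).const_mul 2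
    have := (h1.sub h3).sub h4
    refine this.congr_deriv ?_
    ring
  apply monotoneOn_of_deriv_nonneg (convex_Icc p x)
  · apply ContinuousOn.sub
    apply ContinuousOn.sub
    · exact ContinuousOn.log continuousOn_id (fun u hu => ne_of_gt (hsub hu).1)
    · exact ContinuousOn.log (continuous_const.sub continuous_id).continuousOn
        (fun u hu h => by have := (hsub hu).2; rw [sub_eq_zero] at h; linarith)
    · exact (continuous_const.mul continuous_id).continuousOn
  · intro u hu
    rw [interior_Icc] at hu
    exact ((hder u (hsub ⟨le_of_lt hu.1, le_of_lt hu.2⟩)).differentiableAt).differentiableWithinAt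
  · intro u hu
    rw [interior_Icc] at hu
    have hu' : u ∈ Set.Ioo 0 1 := hsub ⟨le_of_lt hu.1, le_of_lt hu.2⟩
    rw [(hder u hu').deriv]
    have h01 : 0 < u := hu'.1
    have h02 : u < 1 := hu'.2
    rw [div_add_div _ _ (ne_of_gt h01) (by linarith : (1:ℝ)-u ≠ 0)]
    have key : u * (1-u) ≤ 1/4 := by nlinarith [sq_nonneg (2*u-1)]
    have hpos : (0:ℝ) < u * (1-u) := by nlinarith
    rw [sub_nonneg, le_div_iff₀ hpos]
    nlinarith

lemma pinsker {p x : ℝ} (hp : 0 < p) (hpx : p ≤ x) (hx : x < 1) :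
    (x - p)^2 ≤ x * (Real.log x - Real.log p) + (1-x) * (Real.log (1-x) - Real.log (1-p)) := by
  set H : ℝ → ℝ := fun u => Real.log u - Real.log (1-u) - 2*u with hH
  set G : ℝ → ℝ := fun u =>
    u * (Real.log u - Real.log p) + (1-u)*(Real.log (1-u) - Real.log (1-p)) - (u-p)^2 with hG
  have hsub : Set.Icc p x ⊆ Set.Ioo 0 1 :=
    fun u hu => ⟨lt_of_lt_of_le hp hu.1, lt_of_le_of_lt hu.2 hx⟩
  have hGder : ∀ u ∈ Set.Ioo 0 1, HasDerivAt G (H u - H p) u := by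
    intro u hu
    have hu0 : u ≠ 0 := ne_of_gt hu.1
    have hu1 : (1:ℝ) - u ≠ 0 := by have := hu.2; intro h; rw [sub_eq_zero] at h; linarith
    have h1 : HasDerivAt (fun u : ℝ => Real.log u - Real.log p) (1/u) u := by
      simpa [one_div] using (Real.hasDerivAt_log hu0).sub_const (Real.log p)
    have h2 : HasDerivAt (fun u : ℝ => 1 - u) (-1) u := by
      simpa using (hasDerivAt_id u).const_sub 1
    have h3 : HasDerivAt (fun u : ℝ => Real.log (1-u) - Real.log (1-p)) (-1/(1-u)) u := by
      have := (h2.log hu1).sub_const (Real.log (1-p))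
      simpa [div_eq_mul_inv] using this
    have h4 : HasDerivAt (fun u : ℝ => (u - p)^2) (2*(u-p)) u := by
      have := ((hasDerivAt_id u).sub_const p).pow 2
      simp at this; exact this
    have := (((hasDerivAt_id u).mul h1).add (h2.mul h3)).sub h4
    refine this.congr_deriv ?_
    rw [hH]
    simp only [id]
    field_simp
    ring
  have hGmono : MonotoneOn G (Set.Icc p x) := by
    apply monotoneOn_of_deriv_nonneg (convex_Icc p x)
    · apply ContinuousOn.sub
      apply ContinuousOn.add
      · exact ContinuousOn.mul continuousOn_id
          ((ContinuousOn.log continuousOn_id (fun u hu => ne_of_gt (hsub hu).1)).sub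
            continuousOn_const)
      · exact ContinuousOn.mul (continuous_const.sub continuous_id).continuousOn
          ((ContinuousOn.log (continuous_const.sub continuous_id).continuousOn
            (fun u hu h => by
              have := (hsub hu).2
              rw [Pi.sub_apply, sub_eq_zero] at h
              simp only [id] at h
              linarith)).sub
            continuousOn_const)
      · exact ((continuous_id.sub continuous_const).pow 2).continuousOn
    · intro u hu
      rw [interior_Icc] at hu
      exact ((hGder u (hsub ⟨le_of_lt hu.1, le_of_lt hu.2⟩)).differentiableAt).differentiableWithinAt
    · intro u hu
      rw [interior_Icc] at hu
      have hu' : u ∈ Set.Icc p x := ⟨le_of_lt hu.1, le_of_lt hu.2⟩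
      rw [(hGder u (hsub hu')).deriv, sub_nonneg]
      exact H_mono hp hx hpx (Set.left_mem_Icc.mpr hpx) hu' hu'.1
  have hGp : G p = 0 := by simp [hG]
  have h0x : 0 ≤ G x := by
    rw [← hGp]
    exact hGmono (Set.left_mem_Icc.mpr hpx) (Set.right_mem_Icc.mpr hpx) hpx
  rw [hG] at h0x
  simp only [sub_nonneg] at h0x
  linarith

lemma trial_bound {p x : ℝ} (hp : 0 < p) (hpx : p < x) (hx : x < 1) :
    ∃ y : ℝ, 1 ≤ y ∧ (1 - p + p*y) ≤ Real.exp (-(x-p)^2) * y ^ x := by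
  have hx0 : 0 < x := lt_trans hp hpx
  have h1x : 0 < 1 - x := by linarith
  have h1p : 0 < 1 - p := by linarith
  refine ⟨x*(1-p)/((1-x)*p), ?_, ?_⟩
  · rw [le_div_iff₀ (by positivity)]
    nlinarith
  · have hy0 : 0 < x*(1-p)/((1-x)*p) := by positivity
    have hval : 1 - p + p * (x*(1-p)/((1-x)*p)) = (1-p)/(1-x) := by
      field_simp
      ring
    rw [hval]
    have hlogy : Real.log (x*(1-p)/((1-x)*p))
        = Real.log x - Real.log p + (Real.log (1-p) - Real.log (1-x)) := by
      rw [Real.log_div (by positivity) (by positivity), Real.log_mul (by positivity) (by positivity),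
        Real.log_mul (by positivity) (by positivity)]
      ring
    have hrpow : (x*(1-p)/((1-x)*p)) ^ x = Real.exp (x * Real.log (x*(1-p)/((1-x)*p))) := by
      rw [Real.rpow_def_of_pos hy0]
      ring_nf
    rw [hrpow, ← Real.exp_add]
    have hlhs : (1-p)/(1-x) = Real.exp (Real.log (1-p) - Real.log (1-x)) := by
      rw [Real.exp_sub, Real.exp_log h1p, Real.exp_log h1x]
    rw [hlhs, Real.exp_le_exp, hlogy]
    have hpin := pinsker hp (le_of_lt hpx) hx
    nlinarith [hpin]

lemma blockJ_card {n m S : ℕ} (hm : 1 ≤ m) (hn : n = m * S) {s : ℕ} (hs : s < S) :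
    ((univ : Finset (Fin n)).filter fun j : Fin n => (j : ℕ) / m = s).card = m := by
  have key : ((univ : Finset (Fin n)).filter fun j : Fin n => (j : ℕ) / m = s).card
      = (Finset.Ico (s*m) (s*m+m)).card := by
    refine Finset.card_bij' (fun j _ => (j : ℕ))
      (fun a ha => (⟨a, ?_⟩ : Fin n)) ?_ ?_ ?_ ?_
    · rw [Finset.mem_Ico] at ha
      have h1 : (s+1) * m ≤ S * m := Nat.mul_le_mul_right m hs
      have h4 : (s+1) * m = s*m + m := Nat.succ_mul s m
      have h3 : a < n := by rw [hn, Nat.mul_comm]; omega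
      exact h3
    · intro j hj
      rw [Finset.mem_filter] at hj
      show (j : ℕ) ∈ Finset.Ico (s*m) (s*m+m)
      rw [Finset.mem_Ico, Nat.mul_comm s m]
      have hdm := Nat.div_add_mod (j:ℕ) m
      have hmod : (j:ℕ) % m < m := Nat.mod_lt _ (by omega)
      rw [hj.2] at hdm
      omega
    · intro a ha
      rw [Finset.mem_Ico] at ha
      rw [Finset.mem_filter]
      refine ⟨Finset.mem_univ _, ?_⟩
      show a / m = s
      have h1 : s * m ≤ a := ha.1
      have h4 : (s+1) * m = s*m + m := Nat.succ_mul s m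
      have h2 : a < (s+1) * m := by omega
      exact Nat.div_eq_of_lt_le (by omega) (by omega)
    · intro j hj; ext; rfl
    · intro a ha; rfl
  rw [key, Nat.card_Ico]
  omega

lemma blockSet_eq {n : ℕ} (m : ℕ) (σ : Equiv.Perm (Fin n)) (s : ℕ) :
    blockSet m σ s = ((univ : Finset (Fin n)).filter fun j : Fin n => (j : ℕ) / m = s).image ⇑σ := by
  ext i
  rw [blockSet]
  simp only [Finset.mem_filter, Finset.mem_univ, true_and, Finset.mem_image]
  constructor
  · intro h
    exact ⟨σ.symm i, h, by simp⟩
  · rintro ⟨j, hj, rfl⟩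
    simpa using hj

lemma inter_card_compl {n : ℕ} (B I : Finset (Fin n)) :
    (B ∩ I).card + (B ∩ Iᶜ).card = B.card := by
  have h : B ∩ Iᶜ = B \ I := by
    ext a
    simp [Finset.mem_sdiff, Finset.mem_inter, Finset.mem_compl]
  rw [h]
  exact Finset.card_inter_add_card_sdiff B I

lemma badBlock_bound {n m : ℕ} (hm : 1 ≤ m) (J O : Finset (Fin n)) (hJ : J.card = m)
    (t : ℝ) (ht : 0 < t) :
    (((univ : Finset (Equiv.Perm (Fin n))).filter
        (fun σ : Equiv.Perm (Fin n) =>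
          (m:ℝ) * ((O.card:ℝ)/n) + t < ((J.image ⇑σ ∩ O).card : ℝ))).card : ℝ)
      ≤ (n.factorial : ℝ) * Real.exp (-(t^2/m)) := by
  classical
  set p : ℝ := (O.card:ℝ)/n with hp
  set Bad := (univ : Finset (Equiv.Perm (Fin n))).filter
      (fun σ : Equiv.Perm (Fin n) => (m:ℝ) * ((O.card:ℝ)/n) + t < ((J.image ⇑σ ∩ O).card : ℝ)) with hBad
  have hm0 : (0:ℝ) < m := by exact_mod_cast hm
  have hZle : ∀ σ : Equiv.Perm (Fin n), ((J.image ⇑σ ∩ O).card : ℝ) ≤ m := by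
    intro σ
    have h1 : (J.image ⇑σ ∩ O).card ≤ (J.image ⇑σ).card :=
      Finset.card_le_card Finset.inter_subset_left
    have h2 : (J.image ⇑σ).card = m := by
      rw [Finset.card_image_of_injective _ σ.injective, hJ]
    exact_mod_cast h2 ▸ h1
  set x : ℝ := p + t/m with hx
  by_cases hx1 : 1 ≤ x
  · -- Bad is empty
    have : Bad = ∅ := by
      rw [Finset.eq_empty_iff_forall_notMem]
      intro σ hσ
      rw [hBad, Finset.mem_filter] at hσ
      have h1 := hσ.2
      have h2 := hZle σ
      have : (m:ℝ) * p + t = m * x := by rw [hx]; field_simp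
      nlinarith
    rw [this]
    simp only [Finset.card_empty, Nat.cast_zero]
    positivity
  push_neg at hx1
  by_cases hp0 : O.card = 0
  · have hOempty : O = ∅ := Finset.card_eq_zero.mp hp0
    have : Bad = ∅ := by
      rw [Finset.eq_empty_iff_forall_notMem]
      intro σ hσ
      rw [hBad, Finset.mem_filter] at hσ
      have h1 := hσ.2
      rw [hOempty] at h1
      simp only [Finset.inter_empty, Finset.card_empty, Nat.cast_zero, zero_div,
        mul_zero, zero_add] at h1
      linarith
    rw [this]
    simp only [Finset.card_empty, Nat.cast_zero]
    positivity
  -- main case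
  have hn0 : 0 < n := by
    rcases Nat.eq_zero_or_pos n with rfl | h
    · exact absurd (Finset.eq_empty_of_isEmpty O) (by simpa using hp0)
    · exact h
  have hppos : 0 < p := by
    rw [hp]
    have : 0 < O.card := Nat.pos_of_ne_zero hp0
    positivity
  have hpx : p < x := by
    rw [hx]
    have : 0 < t/m := by positivity
    linarith
  obtain ⟨y, hy1, hineq⟩ := trial_bound hppos hpx hx1
  have hy0 : (0:ℝ) < y := lt_of_lt_of_le one_pos hy1
  -- Chernoff
  have hchern : (Bad.card : ℝ) * y ^ ((m:ℝ)*x) ≤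
      ∑ σ : Equiv.Perm (Fin n), y ^ ((J.image ⇑σ ∩ O).card) := by
    calc (Bad.card : ℝ) * y ^ ((m:ℝ)*x)
        = ∑ _σ ∈ Bad, y ^ ((m:ℝ)*x) := by rw [Finset.sum_const, nsmul_eq_mul]
      _ ≤ ∑ σ ∈ Bad, y ^ ((J.image ⇑σ ∩ O).card) := by
          apply Finset.sum_le_sum
          intro σ hσ
          rw [hBad, Finset.mem_filter] at hσ
          have h1 : (m:ℝ) * x ≤ ((J.image ⇑σ ∩ O).card : ℝ) := by
            have : (m:ℝ) * p + t = m * x := by rw [hx]; field_simp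
            linarith [hσ.2]
          calc y ^ ((m:ℝ)*x) ≤ y ^ (((J.image ⇑σ ∩ O).card : ℕ) : ℝ) :=
                Real.rpow_le_rpow_of_exponent_le hy1 h1
            _ = y ^ ((J.image ⇑σ ∩ O).card) := Real.rpow_natCast y _
      _ ≤ ∑ σ : Equiv.Perm (Fin n), y ^ ((J.image ⇑σ ∩ O).card) := by
          apply Finset.sum_le_sum_of_subset_of_nonneg (Finset.subset_univ _)
          intro σ _ _
          positivity
  have hmgf := sumPerm m J O hJ y (le_of_lt hy0)
  have hrhs : (1 - (O.card:ℝ)/n + (O.card:ℝ)/n * y)^m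
      ≤ Real.exp (-(t^2/m)) * y ^ ((m:ℝ)*x) := by
    have hbase : 0 ≤ 1 - p + p * y := by nlinarith [hppos, hpx, hx1]
    calc (1 - (O.card:ℝ)/n + (O.card:ℝ)/n * y)^m
        = (1 - p + p*y)^m := by rw [hp]
      _ ≤ (Real.exp (-(x-p)^2) * y ^ x)^m := pow_le_pow_left₀ hbase hineq m
      _ = Real.exp (-(x-p)^2)^m * (y ^ x)^m := mul_pow _ _ m
      _ = Real.exp (-(m:ℝ)*(x-p)^2) * y ^ ((m:ℝ)*x) := by
          rw [← Real.exp_nat_mul]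
          congr 1
          · congr 1; ring
          · rw [← Real.rpow_natCast (y ^ x) m, ← Real.rpow_mul (le_of_lt hy0)]
            congr 1; ring
      _ = Real.exp (-(t^2/m)) * y ^ ((m:ℝ)*x) := by
          have hxp : x - p = t/m := by rw [hx]; ring
          have hee : -(m:ℝ)*(x-p)^2 = -(t^2/m) := by
            rw [hxp]; field_simp
          rw [hee]
  have hfinal : (Bad.card : ℝ) * y ^ ((m:ℝ)*x)
      ≤ ((n.factorial : ℝ) * Real.exp (-(t^2/m))) * y ^ ((m:ℝ)*x) := by
    calc (Bad.card : ℝ) * y ^ ((m:ℝ)*x)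
        ≤ ∑ σ : Equiv.Perm (Fin n), y ^ ((J.image ⇑σ ∩ O).card) := hchern
      _ ≤ (n.factorial : ℝ) * (1 - (O.card:ℝ)/n + (O.card:ℝ)/n * y)^m := hmgf
      _ ≤ (n.factorial : ℝ) * (Real.exp (-(t^2/m)) * y ^ ((m:ℝ)*x)) :=
          mul_le_mul_of_nonneg_left hrhs (by positivity)
      _ = ((n.factorial : ℝ) * Real.exp (-(t^2/m))) * y ^ ((m:ℝ)*x) := by ring
  have hypos : (0:ℝ) < y ^ ((m:ℝ)*x) := Real.rpow_pos_of_pos hy0 _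
  exact le_of_mul_le_mul_right hfinal hypos


/-- **Lower bound on the number of inliers per block** (Lemma 6): with `n = mS` and a
uniformly random partition of `{1,…,n}` into `S` blocks of size `m` (via a uniform
random permutation), with probability at least `1 - 1/(2n)`, simultaneously for every
block `s`: `m(1 - |O|/n) - √(m log(4nS)) ≤ |B_s ∩ I| ≤ m`, where `O = Iᶜ`. -/
theorem statement9
    (n m S : ℕ) (hm : 1 ≤ m) (hS : 1 ≤ S) (hn : n = m * S) (I : Finset (Fin n)) :
    1 - (2 * (n : ℝ≥0∞))⁻¹ ≤
      unif (Equiv.Perm (Fin n))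
        {σ | ∀ s : Fin S,
          (m : ℝ) * (1 - ((Iᶜ.card : ℝ) / n)) -
              Real.sqrt (m * Real.log (4 * n * S)) ≤
            ((blockSet m σ s.1 ∩ I).card : ℝ) ∧
          (blockSet m σ s.1 ∩ I).card ≤ m} := by
  classical
  have hn1 : 1 ≤ n := by
    rw [hn]; exact Nat.one_le_iff_ne_zero.mpr (Nat.mul_ne_zero (by omega) (by omega))
  set O : Finset (Fin n) := Iᶜ with hO
  set t : ℝ := Real.sqrt (m * Real.log (4 * n * S)) with htdef
  have hlogpos : 0 < Real.log (4 * n * S) := by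
    apply Real.log_pos
    have h1 : (1:ℝ) ≤ n := by exact_mod_cast hn1
    have h2 : (1:ℝ) ≤ S := by exact_mod_cast hS
    nlinarith
  have hm0 : (0:ℝ) < m := by exact_mod_cast hm
  have ht : 0 < t := Real.sqrt_pos.mpr (by positivity)
  have ht2 : t^2 = m * Real.log (4 * n * S) := Real.sq_sqrt (by positivity)
  -- the event as a finset
  set P : Equiv.Perm (Fin n) → Prop := fun σ => ∀ s : Fin S,
      (m : ℝ) * (1 - ((Iᶜ.card : ℝ) / n)) - t ≤ ((blockSet m σ s.1 ∩ I).card : ℝ) ∧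
      (blockSet m σ s.1 ∩ I).card ≤ m with hP
  set GoodF : Finset (Equiv.Perm (Fin n)) := univ.filter P with hGoodF
  set BadF : Finset (Equiv.Perm (Fin n)) := univ.filter (fun σ => ¬ P σ) with hBadF
  -- blocks
  set J : ℕ → Finset (Fin n) := fun s => (univ : Finset (Fin n)).filter
      (fun j : Fin n => (j : ℕ) / m = s) with hJ
  have hJcard : ∀ s : Fin S, (J s.1).card = m := fun s => blockJ_card hm hn s.2
  have hBcard : ∀ (σ : Equiv.Perm (Fin n)) (s : Fin S), (blockSet m σ s.1).card = m := by
    intro σ s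
    rw [blockSet_eq, Finset.card_image_of_injective _ σ.injective]
    exact hJcard s
  -- union bound
  set BadS : ℕ → Finset (Equiv.Perm (Fin n)) := fun s =>
      (univ : Finset (Equiv.Perm (Fin n))).filter
        (fun σ : Equiv.Perm (Fin n) =>
          (m:ℝ) * ((O.card:ℝ)/n) + t < (((J s).image ⇑σ ∩ O).card : ℝ)) with hBadS
  have hsubset : BadF ⊆ (univ : Finset (Fin S)).biUnion (fun s => BadS s.1) := by
    intro σ hσ
    simp only [hBadF, Finset.mem_filter, hP, Finset.mem_univ, true_and] at hσ
    push_neg at hσ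
    obtain ⟨s, hs⟩ := hσ
    rw [Finset.mem_biUnion]
    refine ⟨s, Finset.mem_univ _, ?_⟩
    rw [hBadS, Finset.mem_filter]
    refine ⟨Finset.mem_univ _, ?_⟩
    -- from failure of the block condition
    have hup : (blockSet m σ s.1 ∩ I).card ≤ m := by
      have h := Finset.card_le_card
        (by exact Finset.inter_subset_left :
          blockSet m σ s.1 ∩ I ⊆ blockSet m σ s.1)
      rw [hBcard σ s] at h
      exact h
    have hlow : ((blockSet m σ s.1 ∩ I).card : ℝ)
        < (m:ℝ) * (1 - ((Iᶜ.card : ℝ)/n)) - t := by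
      by_contra hcon
      push_neg at hcon
      exact absurd (hs hcon) (Nat.not_lt.mpr hup)
    -- card identity
    have hid : (blockSet m σ s.1 ∩ I).card + (blockSet m σ s.1 ∩ O).card = m := by
      rw [hO, inter_card_compl, hBcard σ s]
    have himg : blockSet m σ s.1 ∩ O = (J s.1).image ⇑σ ∩ O := by
      rw [blockSet_eq, hJ]
    rw [← himg]
    have h1 : ((blockSet m σ s.1 ∩ I).card : ℝ)
        = (m:ℝ) - ((blockSet m σ s.1 ∩ O).card : ℝ) := by
      have h2 : ((blockSet m σ s.1 ∩ I).card : ℝ)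
          + ((blockSet m σ s.1 ∩ O).card : ℝ) = (m:ℝ) := by
        exact_mod_cast hid
      linarith
    rw [h1] at hlow
    have hKn : ((Iᶜ.card : ℝ)/n) = (O.card:ℝ)/n := by rw [hO]
    rw [hKn] at hlow
    have hexpand : (m:ℝ) * (1 - (O.card:ℝ)/n) = m - m * ((O.card:ℝ)/n) := by ring
    rw [hexpand] at hlow
    linarith [hlow]
  -- per-block bound
  have hblock : ∀ s : Fin S, ((BadS s.1).card : ℝ)
      ≤ (n.factorial : ℝ) * Real.exp (-(t^2/m)) := by
    intro s
    exact badBlock_bound hm (J s.1) O (hJcard s) t ht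
  have hexp : Real.exp (-(t^2/m)) = ((4:ℝ) * n * S)⁻¹ := by
    rw [ht2]
    have : -( (m : ℝ) * Real.log (4 * n * S) / m) = - Real.log (4*n*S) := by
      field_simp
    rw [this, Real.exp_neg, Real.exp_log (by positivity)]
  -- total bad card
  have hbadcard : (BadF.card : ℝ) ≤ (n.factorial : ℝ) / (4 * n) := by
    have h1 : BadF.card ≤ ∑ s : Fin S, (BadS s.1).card :=
      le_trans (Finset.card_le_card hsubset) (Finset.card_biUnion_le)
    have h2 : ((BadF.card : ℕ) : ℝ) ≤ ∑ s : Fin S, ((BadS s.1).card : ℝ) := by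
      exact_mod_cast h1
    have h3 : ∑ s : Fin S, ((BadS s.1).card : ℝ)
        ≤ ∑ _s : Fin S, (n.factorial : ℝ) * Real.exp (-(t^2/m)) :=
      Finset.sum_le_sum (fun s _ => hblock s)
    have h4 : ∑ _s : Fin S, (n.factorial : ℝ) * Real.exp (-(t^2/m))
        = (S : ℝ) * ((n.factorial : ℝ) * ((4:ℝ) * n * S)⁻¹) := by
      rw [Finset.sum_const, Finset.card_univ, Fintype.card_fin, nsmul_eq_mul, hexp]
    have hS0 : (0:ℝ) < S := by exact_mod_cast hS
    have hn0 : (0:ℝ) < n := by exact_mod_cast hn1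
    have h5 : (S : ℝ) * ((n.factorial : ℝ) * ((4:ℝ) * n * S)⁻¹)
        = (n.factorial : ℝ) / (4 * n) := by
      field_simp
    linarith [h2, h3, h4.le, h4.ge]
  -- to natural number inequality
  have hnat : BadF.card * (2 * n) ≤ n.factorial := by
    have hn0 : (0:ℝ) < n := by exact_mod_cast hn1
    have hfac0 : (0:ℝ) ≤ (n.factorial : ℝ) := by positivity
    have : (BadF.card : ℝ) * (2 * n) ≤ (n.factorial : ℝ) := by
      calc (BadF.card : ℝ) * (2*n) ≤ ((n.factorial : ℝ) / (4*n)) * (2*n) := by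
            apply mul_le_mul_of_nonneg_right hbadcard (by positivity)
        _ = (n.factorial : ℝ) / 2 := by field_simp; ring
        _ ≤ (n.factorial : ℝ) := by linarith
    exact_mod_cast this
  -- finset equality with the set in the statement
  have hseteq : {σ : Equiv.Perm (Fin n) | ∀ s : Fin S,
      (m : ℝ) * (1 - ((Iᶜ.card : ℝ) / n)) - Real.sqrt (m * Real.log (4 * n * S)) ≤
        ((blockSet m σ s.1 ∩ I).card : ℝ) ∧
      (blockSet m σ s.1 ∩ I).card ≤ m} = (GoodF : Set (Equiv.Perm (Fin n))) := by
    ext σ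
    simp only [Set.mem_setOf_eq, Finset.coe_filter, hGoodF, Finset.mem_filter,
      Finset.mem_univ, true_and, Set.mem_setOf_eq, hP, ← htdef]
  rw [hseteq]
  -- compute the measure
  have hcount : Measure.count (GoodF : Set (Equiv.Perm (Fin n))) = GoodF.card :=
    Measure.count_apply_finset' (MeasurableSpace.measurableSet_top)
  have hmeas : unif (Equiv.Perm (Fin n)) (GoodF : Set (Equiv.Perm (Fin n)))
      = ((n.factorial : ℝ≥0∞))⁻¹ * GoodF.card := by
    rw [unif, Measure.smul_apply, smul_eq_mul, hcount, Fintype.card_perm, Fintype.card_fin]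
  rw [hmeas]
  -- ENNReal bookkeeping
  have hfact0 : ((n.factorial : ℕ) : ℝ≥0∞) ≠ 0 := by
    simp [Nat.factorial_ne_zero]
  have hfacttop : ((n.factorial : ℕ) : ℝ≥0∞) ≠ ⊤ := ENNReal.natCast_ne_top _
  have h2n0 : (2 * (n : ℝ≥0∞)) ≠ 0 :=
    mul_ne_zero (by norm_num) (Nat.cast_ne_zero.mpr (by omega))
  have h2ntop : (2 * (n : ℝ≥0∞)) ≠ ⊤ := by
    apply ENNReal.mul_ne_top (by simp)
    exact ENNReal.natCast_ne_top n
  rw [tsub_le_iff_right]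
  have hGB : (GoodF.card : ℕ) + BadF.card = n.factorial := by
    have h := Finset.card_filter_add_card_filter_not
      (s := (univ : Finset (Equiv.Perm (Fin n)))) (p := P)
    rw [Finset.card_univ, Fintype.card_perm, Fintype.card_fin] at h
    exact h
  have hBle : ((BadF.card : ℕ) : ℝ≥0∞) * (2 * (n:ℝ≥0∞)) ≤ ((n.factorial : ℕ) : ℝ≥0∞) := by
    exact_mod_cast hnat
  have hBbound : ((n.factorial : ℕ) : ℝ≥0∞)⁻¹ * (BadF.card : ℝ≥0∞) ≤ (2 * (n:ℝ≥0∞))⁻¹ := by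
    calc ((n.factorial : ℕ) : ℝ≥0∞)⁻¹ * (BadF.card : ℝ≥0∞)
          ≤ ((n.factorial : ℕ) : ℝ≥0∞)⁻¹ * (((n.factorial : ℕ) : ℝ≥0∞) / (2 * (n:ℝ≥0∞))) := by
            apply mul_le_mul_right _ _
            rw [ENNReal.le_div_iff_mul_le (Or.inl h2n0) (Or.inl h2ntop)]
            exact hBle
        _ = (2 * (n:ℝ≥0∞))⁻¹ := by
            rw [ENNReal.div_eq_inv_mul,
              mul_comm ((2 * (n:ℝ≥0∞))⁻¹) (((n.factorial : ℕ) : ℝ≥0∞)), ← mul_assoc,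
              ENNReal.inv_mul_cancel hfact0 hfacttop, one_mul]
  calc (1 : ℝ≥0∞) = ((n.factorial : ℕ) : ℝ≥0∞)⁻¹ * ((n.factorial : ℕ) : ℝ≥0∞) :=
        (ENNReal.inv_mul_cancel hfact0 hfacttop).symm
    _ = ((n.factorial : ℕ) : ℝ≥0∞)⁻¹ * ((GoodF.card : ℝ≥0∞) + (BadF.card : ℝ≥0∞)) := by
        congr 1
        rw [← hGB]
        push_cast
        ring
    _ = ((n.factorial : ℕ) : ℝ≥0∞)⁻¹ * (GoodF.card : ℝ≥0∞)
        + ((n.factorial : ℕ) : ℝ≥0∞)⁻¹ * (BadF.card : ℝ≥0∞) := by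
        rw [mul_add]
    _ ≤ ((n.factorial : ℕ) : ℝ≥0∞)⁻¹ * (GoodF.card : ℝ≥0∞) + (2 * (n:ℝ≥0∞))⁻¹ :=
        add_le_add_right hBbound _

end Stmt9
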